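/- arXiv:1204.2282 — 2 statements merged into one kernel-verified Lean document; each statement's English description precedes it below -/
import Mathlib

section
/- For all integers $m \geq 0$, $j \geq 0$ and real $\alpha$, the two representations of the type II exceptional Laguerre polynomial agree: $z\, L^{-\alpha-1}_m(z)\, L^{\alpha+2}_{j-1}(z) + (m-\alpha-1)\, L^{-\alpha-2}_m(z)\, L^{\alpha+1}_j(z) = -z\, L^{-\alpha}_{m-1}(z)\, L^{\alpha+1}_j(z) - (\alpha+1+j)\, L^{-\alpha-1}_m(z)\, L^{\alpha}_j(z)$. -/
/-!
Two contiguous relations, valid for all integers `n ≥ 0` with `L^β_{-1} = 0`, suffice: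
`L^β_n = L^{β+1}_n - L^{β+1}_{n-1}` and `z L^{β+1}_{n-1} = (n + β) L^β_{n-1} - n L^β_n`.
The difference of the two sides is a linear combination of the first at `(α, j)` and `(-α-2, m)`
and the second at `(α+1, j)` and `(-α-1, m)`. Each relation is compared coefficientwise, using
Pascal's rule and `(k + 1) C(x, k + 1) = x C(x - 1, k)` for generalized binomial coefficients.
-/

noncomputable def gbinom (x : ℝ) (k : ℕ) : ℝ :=
  (∏ i ∈ Finset.range k, (x - i)) / (Nat.factorial k)

noncomputable def poch (x : ℝ) (k : ℕ) : ℝ := ∏ i ∈ Finset.range k, (x + i)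

/-- Classical (associated) Laguerre polynomial `L^α_n(x)`, with `L^α_n = 0` for `n < 0`. -/
noncomputable def lag (α : ℝ) (n : ℤ) (x : ℝ) : ℝ :=
  if n < 0 then 0 else
    ∑ k ∈ Finset.range (n.toNat + 1),
      (-1 : ℝ) ^ k * gbinom ((n : ℝ) + α) (n.toNat - k) * x ^ k / (Nat.factorial k)

open Finset Nat

theorem gbinom_eq_choose (x : ℝ) (k : ℕ) : gbinom x k = Ring.choose x k := by
  rw [gbinom, Ring.choose_eq_smul, ← Polynomial.aeval_eq_smeval, smul_eq_mul, div_eq_inv_mul,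
    Polynomial.aeval_def, ← Polynomial.eval_map, descPochhammer_map,
    descPochhammer_eval_eq_prod_range]

theorem succ_mul_choose_succ {R : Type*} [CommRing R] [BinomialRing R] (x : R) (k : ℕ) :
    ((k : R) + 1) * Ring.choose x (k + 1) = x * Ring.choose (x - 1) k := by
  simpa using Ring.choose_smul_choose x (Nat.le_add_left 1 k)

noncomputable def lagCoeff (α : ℝ) (n k : ℕ) : ℝ :=
  (-1) ^ k * Ring.choose ((n : ℝ) + α) (n - k) / k !

theorem lag_natCast (α : ℝ) (n : ℕ) (x : ℝ) :
    lag α n x = ∑ k ∈ range (n + 1), lagCoeff α n k * x ^ k := by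
  rw [lag, if_neg (by omega), Int.toNat_natCast]
  refine sum_congr rfl fun k _ => ?_
  rw [lagCoeff, gbinom_eq_choose, Int.cast_natCast]
  ring

theorem lag_neg_one (α x : ℝ) : lag α (-1) x = 0 := by
  rw [lag, if_pos (by norm_num)]

theorem lagCoeff_self (α : ℝ) (n : ℕ) : lagCoeff α n n = (-1) ^ n / n ! := by
  rw [lagCoeff, Nat.sub_self, Ring.choose_zero_right, mul_one]

theorem lag_zero (α x : ℝ) : lag α 0 x = 1 := by
  simpa [lagCoeff_self] using lag_natCast α 0 x

theorem lagCoeff_succ (β : ℝ) {n k : ℕ} (hk : k ≤ n) :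
    lagCoeff β (n + 1) k = lagCoeff (β + 1) (n + 1) k - lagCoeff (β + 1) n k := by
  have hpascal := Ring.choose_succ_succ ((n : ℝ) + β + 1) (n - k)
  rw [lagCoeff, lagCoeff, lagCoeff, show n + 1 - k = n - k + 1 by omega]
  push_cast
  rw [show (n : ℝ) + 1 + (β + 1) = n + β + 1 + 1 by ring, hpascal,
    show (n : ℝ) + 1 + β = n + β + 1 by ring, show (n : ℝ) + (β + 1) = n + β + 1 by ring]
  ring

theorem lagCoeff_contiguous_zero (β : ℝ) (n : ℕ) :
    ((n : ℝ) + 1) * lagCoeff β (n + 1) 0 = (n + 1 + β) * lagCoeff β n 0 := by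
  have h := succ_mul_choose_succ ((n : ℝ) + 1 + β) n
  simp only [lagCoeff, pow_zero, one_mul, Nat.sub_zero, factorial_zero, cast_one, div_one]
  push_cast
  rw [h, show (n : ℝ) + 1 + β - 1 = n + β by ring]

theorem lagCoeff_contiguous_succ (β : ℝ) {n k : ℕ} (hk : k < n) :
    lagCoeff (β + 1) n k + ((n : ℝ) + 1) * lagCoeff β (n + 1) (k + 1) =
      (n + 1 + β) * lagCoeff β n (k + 1) := by
  obtain ⟨r, rfl⟩ : ∃ r, n = r + k + 1 := ⟨n - k - 1, by omega⟩
  have h := succ_mul_choose_succ ((r + k + 1 : ℕ) + 1 + β) r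
  rw [lagCoeff, lagCoeff, lagCoeff, show r + k + 1 - k = r + 1 by omega,
    show r + k + 1 + 1 - (k + 1) = r + 1 by omega, show r + k + 1 - (k + 1) = r by omega,
    factorial_succ]
  push_cast at h ⊢
  rw [show (r : ℝ) + k + 1 + 1 + β - 1 = r + k + 1 + β by ring] at h
  rw [show (r : ℝ) + k + 1 + (β + 1) = r + k + 1 + 1 + β by ring]
  field_simp
  linear_combination -(-1) ^ k * h

theorem lagCoeff_contiguous_top (β : ℝ) (n : ℕ) :
    lagCoeff (β + 1) n n + ((n : ℝ) + 1) * lagCoeff β (n + 1) (n + 1) = 0 := by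
  rw [lagCoeff_self, lagCoeff_self, factorial_succ]
  push_cast
  field_simp
  ring

theorem lag_succ (β x : ℝ) (n : ℕ) :
    lag β (n + 1 : ℕ) x = lag (β + 1) (n + 1 : ℕ) x - lag (β + 1) n x := by
  rw [lag_natCast, lag_natCast, lag_natCast, sum_range_succ, sum_range_succ _ (n + 1),
    lagCoeff_self, lagCoeff_self, add_sub_right_comm, ← sum_sub_distrib]
  congr 1
  refine sum_congr rfl fun k hk => ?_
  rw [lagCoeff_succ β (mem_range_succ_iff.mp hk)]
  ring

theorem mul_lag_add_one_add_succ_mul_lag (β z : ℝ) (n : ℕ) :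
    z * lag (β + 1) n z + ((n : ℝ) + 1) * lag β (n + 1 : ℕ) z = (n + 1 + β) * lag β n z := by
  have hz : z * lag (β + 1) n z =
      ∑ k ∈ range n, lagCoeff (β + 1) n k * z ^ (k + 1) + lagCoeff (β + 1) n n * z ^ (n + 1) := by
    rw [lag_natCast, sum_range_succ, mul_add, mul_sum]
    congr 1
    · exact sum_congr rfl fun k _ => by ring
    · ring
  have hsucc : lag β (n + 1 : ℕ) z = ∑ k ∈ range n, lagCoeff β (n + 1) (k + 1) * z ^ (k + 1)
      + lagCoeff β (n + 1) (n + 1) * z ^ (n + 1) + lagCoeff β (n + 1) 0 := by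
    rw [lag_natCast, sum_range_succ', sum_range_succ, pow_zero, mul_one]
  have hn : lag β n z = ∑ k ∈ range n, lagCoeff β n (k + 1) * z ^ (k + 1) + lagCoeff β n 0 := by
    rw [lag_natCast, sum_range_succ', pow_zero, mul_one]
  have hbulk : ∑ k ∈ range n, lagCoeff (β + 1) n k * z ^ (k + 1)
      + ((n : ℝ) + 1) * ∑ k ∈ range n, lagCoeff β (n + 1) (k + 1) * z ^ (k + 1)
      = (n + 1 + β) * ∑ k ∈ range n, lagCoeff β n (k + 1) * z ^ (k + 1) := by
    rw [mul_sum, mul_sum, ← sum_add_distrib]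
    exact sum_congr rfl fun k hk => by
      linear_combination z ^ (k + 1) * lagCoeff_contiguous_succ β (mem_range.mp hk)
  rw [hz, hsucc, hn]
  linear_combination hbulk + z ^ (n + 1) * lagCoeff_contiguous_top β n
    + lagCoeff_contiguous_zero β n

theorem lag_eq_sub_lag_pred (β x : ℝ) (n : ℕ) :
    lag β n x = lag (β + 1) n x - lag (β + 1) ((n : ℤ) - 1) x := by
  cases n with
  | zero => simp [lag_zero, lag_neg_one]
  | succ n => rw [Nat.cast_succ, add_sub_cancel_right, ← Nat.cast_succ, lag_succ]

theorem mul_lag_add_one_pred (β z : ℝ) (n : ℕ) :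
    z * lag (β + 1) ((n : ℤ) - 1) z = (n + β) * lag β ((n : ℤ) - 1) z - n * lag β n z := by
  cases n with
  | zero => simp [lag_neg_one]
  | succ n =>
    have h := mul_lag_add_one_add_succ_mul_lag β z n
    push_cast at h ⊢
    rw [add_sub_cancel_right]
    linear_combination h

/-- The two representations of the type II exceptional Laguerre polynomial agree. -/
theorem xLaguerreII_dual_rep (m j : ℕ) (α z : ℝ) :
    z * lag (-α - 1) m z * lag (α + 2) ((j : ℤ) - 1) z
        + ((m : ℝ) - α - 1) * lag (-α - 2) m z * lag (α + 1) j z =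
      -(z * lag (-α) ((m : ℤ) - 1) z * lag (α + 1) j z)
        - (α + 1 + j) * lag (-α - 1) m z * lag α j z := by
  have hj := lag_eq_sub_lag_pred α z j
  have hm := lag_eq_sub_lag_pred (-α - 2) z m
  have hzj := mul_lag_add_one_pred (α + 1) z j
  have hzm := mul_lag_add_one_pred (-α - 1) z m
  rw [show -α - 2 + 1 = -α - 1 by ring] at hm
  rw [show α + 1 + 1 = α + 2 by ring] at hzj
  rw [show -α - 1 + 1 = -α by ring] at hzm
  linear_combination lag (-α - 1) m z * hzj + lag (α + 1) j z * hzm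
    + (α + 1 + j) * lag (-α - 1) m z * hj + ((m : ℝ) - α - 1) * lag (α + 1) j z * hm
end

section
/- Let $m \geq 1$ be odd, $\alpha > m-1$, and $j \geq 0$. Then the type II exceptional Laguerre polynomial $\hat{L}^{II,\alpha}_{m,m+j}$ has at least one zero in $(-\infty, 0)$, because $\mathrm{sgn}\, \hat{L}^{II,\alpha}_{m,m+j}(0) = (-1)^{m+1} = 1$ while its leading coefficient is $\frac{m-1-j-\alpha}{m!\, j!}(-1)^{m+j}$, so $\hat{L}^{II,\alpha}_{m,m+j}(z) \to -\infty$ as $z \to -\infty$. -/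
/-- Type II exceptional `X_m`-Laguerre polynomial of degree `m + j`. -/
noncomputable def XLagII (α : ℝ) (m j : ℤ) (x : ℝ) : ℝ :=
  x * lag (-α - 1) m x * lag (α + 2) (j - 1) x
    + ((m : ℝ) - α - 1) * lag (-α - 2) m x * lag (α + 1) j x

open Polynomial Filter

lemma gbinom_pos {x : ℝ} {k : ℕ} (hx : (k : ℝ) - 1 < x) : 0 < gbinom x k := by
  refine div_pos (Finset.prod_pos fun i hi => ?_) (by positivity)
  have : (i : ℝ) + 1 ≤ k := by exact_mod_cast Finset.mem_range.mp hi
  linarith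

lemma neg_one_pow_mul_gbinom_pos {x : ℝ} (hx : x < 0) (k : ℕ) : 0 < (-1) ^ k * gbinom x k := by
  have hprod : ∏ i ∈ Finset.range k, (x - i) = (-1) ^ k * ∏ i ∈ Finset.range k, ((i : ℝ) - x) := by
    simpa using Finset.prod_neg (s := Finset.range k) fun i : ℕ => (i : ℝ) - x
  rw [gbinom, hprod, mul_div_assoc, ← mul_assoc, ← pow_add, Even.neg_one_pow ⟨k, rfl⟩, one_mul]
  refine div_pos (Finset.prod_pos fun i _ => ?_) (by positivity)
  linarith [(Nat.cast_nonneg i : (0 : ℝ) ≤ i)]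

noncomputable def lagPoly (α : ℝ) (n : ℤ) : ℝ[X] :=
  if n < 0 then 0 else
    ∑ k ∈ Finset.range (n.toNat + 1),
      C ((-1 : ℝ) ^ k * gbinom ((n : ℝ) + α) (n.toNat - k) / (Nat.factorial k)) * X ^ k

lemma lag_eq_eval (α : ℝ) (n : ℤ) (x : ℝ) : lag α n x = (lagPoly α n).eval x := by
  unfold lag lagPoly
  split_ifs
  · simp
  · simp only [eval_finsetSum, eval_mul, eval_C, eval_pow, eval_X]
    exact Finset.sum_congr rfl fun k _ => by ring

lemma lagPoly_natCast_coeff (α : ℝ) (n i : ℕ) :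
    (lagPoly α n).coeff i =
      if i ≤ n then (-1 : ℝ) ^ i * gbinom ((n : ℝ) + α) (n - i) / (Nat.factorial i) else 0 := by
  rw [lagPoly, if_neg (by omega)]
  simp [finsetSum_coeff, coeff_X_pow]

lemma lagPoly_natCast_natDegree_le (α : ℝ) (n : ℕ) : (lagPoly α n).natDegree ≤ n :=
  natDegree_le_iff_coeff_eq_zero.mpr fun i hi => by
    rw [lagPoly_natCast_coeff, if_neg (by exact_mod_cast hi.not_ge)]

lemma lagPoly_natCast_coeff_self (α : ℝ) (n : ℕ) :
    (lagPoly α n).coeff n = (-1 : ℝ) ^ n / (Nat.factorial n) := by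
  simp [lagPoly_natCast_coeff, gbinom]

lemma lag_natCast_zero (α : ℝ) (n : ℕ) : lag α n 0 = gbinom ((n : ℝ) + α) n := by
  simp [lag_eq_eval, ← coeff_zero_eq_eval_zero, lagPoly_natCast_coeff]

-- `(j : ℤ) - 1` avoids truncated subtraction: for `j = 0` the first summand must vanish.
noncomputable def xLagIIPoly (α : ℝ) (m j : ℕ) : ℝ[X] :=
  X * lagPoly (-α - 1) m * lagPoly (α + 2) ((j : ℤ) - 1)
    + C ((m : ℝ) - α - 1) * lagPoly (-α - 2) m * lagPoly (α + 1) j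

lemma XLagII_eq_eval (α : ℝ) (m j : ℕ) (x : ℝ) : XLagII α m j x = (xLagIIPoly α m j).eval x := by
  simp [XLagII, xLagIIPoly, lag_eq_eval]

lemma xLagIIPoly_natDegree_le (α : ℝ) (m j : ℕ) : (xLagIIPoly α m j).natDegree ≤ m + j := by
  have hsecond : (C ((m : ℝ) - α - 1) * lagPoly (-α - 2) m * lagPoly (α + 1) j).natDegree
      ≤ 0 + m + j :=
    natDegree_mul_le_of_le (natDegree_mul_le_of_le (natDegree_C _).le
      (lagPoly_natCast_natDegree_le _ _)) (lagPoly_natCast_natDegree_le _ _)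
  rcases j with _ | k
  · simpa [xLagIIPoly, lagPoly] using hsecond
  · have hfirst : (X * lagPoly (-α - 1) m * lagPoly (α + 2) k).natDegree ≤ 1 + m + k :=
      natDegree_mul_le_of_le (natDegree_mul_le_of_le natDegree_X_le
        (lagPoly_natCast_natDegree_le _ _)) (lagPoly_natCast_natDegree_le _ _)
    refine natDegree_add_le_of_degree_le ?_ (by omega)
    simpa [add_comm, add_left_comm] using hfirst

lemma xLagIIPoly_coeff_add (α : ℝ) (m j : ℕ) :
    (xLagIIPoly α m j).coeff (m + j) =
      (-1 : ℝ) ^ (m + j) * ((m : ℝ) - 1 - j - α) / (Nat.factorial m * Nat.factorial j) := by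
  have hsecond : (C ((m : ℝ) - α - 1) * lagPoly (-α - 2) m * lagPoly (α + 1) j).coeff (m + j)
      = ((m : ℝ) - α - 1) * ((-1) ^ m / m.factorial) * ((-1) ^ j / j.factorial) := by
    rw [mul_assoc, coeff_C_mul, coeff_mul_add_eq_of_natDegree_le (lagPoly_natCast_natDegree_le _ _)
      (lagPoly_natCast_natDegree_le _ _), lagPoly_natCast_coeff_self, lagPoly_natCast_coeff_self,
      mul_assoc]
  rcases j with _ | k
  · have hzero : lagPoly (α + 2) ((0 : ℕ) - 1) = 0 := by simp [lagPoly]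
    rw [xLagIIPoly, hzero, mul_zero, zero_add, hsecond]
    simp only [pow_zero, Nat.factorial_zero, Nat.cast_one, div_one, mul_one, add_zero,
      Nat.cast_zero, sub_zero]
    ring
  · have hfirst : (X * lagPoly (-α - 1) m * lagPoly (α + 2) k).coeff (m + (k + 1))
        = (-1 : ℝ) ^ m / m.factorial * ((-1) ^ k / k.factorial) := by
      rw [mul_assoc, show m + (k + 1) = m + k + 1 by omega, coeff_X_mul,
        coeff_mul_add_eq_of_natDegree_le (lagPoly_natCast_natDegree_le _ _)
          (lagPoly_natCast_natDegree_le _ _), lagPoly_natCast_coeff_self,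
        lagPoly_natCast_coeff_self]
    have hk : ((k + 1 : ℕ) : ℤ) - 1 = k := by omega
    rw [xLagIIPoly, hk, coeff_add, hfirst, hsecond]
    push_cast [Nat.factorial_succ]
    field_simp
    ring

lemma XLagII_natCast_zero (α : ℝ) (m j : ℕ) :
    XLagII α m j 0 =
      ((m : ℝ) - α - 1) * gbinom ((m : ℝ) - α - 2) m * gbinom ((j : ℝ) + α + 1) j := by
  simp only [XLagII, Int.cast_natCast, lag_natCast_zero]
  ring_nf

lemma XLagII_natCast_zero_pos {m : ℕ} (hm : Odd m) {α : ℝ} (hα : (m : ℝ) - 1 < α) (j : ℕ) :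
    0 < XLagII α m j 0 := by
  have hfirst : 0 < ((m : ℝ) - α - 1) * gbinom ((m : ℝ) - α - 2) m := by
    have h := neg_one_pow_mul_gbinom_pos (show (m : ℝ) - α - 2 < 0 by linarith) m
    rw [hm.neg_one_pow, neg_one_mul] at h
    nlinarith
  have hsecond : 0 < gbinom ((j : ℝ) + α + 1) j :=
    gbinom_pos (by linarith [(Nat.cast_nonneg m : (0 : ℝ) ≤ m)])
  rw [XLagII_natCast_zero]
  positivity

theorem Polynomial.tendsto_atBot_atBot_of_neg_one_pow_mul_leadingCoeff_neg {P : ℝ[X]}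
    (hdeg : 0 < P.degree) (hP : (-1) ^ P.natDegree * P.leadingCoeff < 0) :
    Tendsto (fun x => P.eval x) atBot atBot := by
  have h := (P.comp (-X)).tendsto_atBot_of_leadingCoeff_nonpos (by simpa using hdeg)
    (by simpa using hP.le)
  simpa [Function.comp_def] using h.comp tendsto_neg_atBot_atTop

lemma tendsto_XLagII_atBot {m j : ℕ} (hmj : 0 < m + j) {α : ℝ} (hα : (m : ℝ) - 1 - j < α) :
    Tendsto (fun z => XLagII α m j z) atBot atBot := by
  have hcoeff := xLagIIPoly_coeff_add α m j
  have hdeg : (xLagIIPoly α m j).natDegree = m + j :=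
    natDegree_eq_of_le_of_coeff_ne_zero (xLagIIPoly_natDegree_le α m j) (by
      rw [hcoeff]
      have : (m : ℝ) - 1 - j - α ≠ 0 := by linarith
      positivity)
  simp_rw [XLagII_eq_eval]
  refine tendsto_atBot_atBot_of_neg_one_pow_mul_leadingCoeff_neg ?_ ?_
  · exact natDegree_pos_iff_degree_pos.mp (hdeg ▸ hmj)
  · rw [leadingCoeff, hdeg, hcoeff, mul_div_assoc, ← mul_assoc, ← pow_add,
      Even.neg_one_pow ⟨_, rfl⟩, one_mul]
    exact div_neg_of_neg_of_pos (by linarith) (by positivity)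

lemma exists_lt_eq_of_tendsto_atBot {α δ : Type*} [ConditionallyCompleteLinearOrder α]
    [TopologicalSpace α] [OrderTopology α] [DenselyOrdered α] [NoMinOrder α] [LinearOrder δ]
    [TopologicalSpace δ] [OrderClosedTopology δ] {f : α → δ} (hf : Continuous f)
    (hlim : Tendsto f atBot atBot) {b : α} {c : δ} (hc : c < f b) : ∃ x < b, f x = c := by
  obtain ⟨a, hfa, hab⟩ := ((tendsto_atBot.1 hlim c).and (eventually_lt_atBot b)).exists
  obtain ⟨x, hx, rfl⟩ := intermediate_value_Ico hab.le hf.continuousOn ⟨hfa, hc⟩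
  exact ⟨x, hx.2, rfl⟩

theorem xLaguerreII_negative_zero_general (m : ℕ) (hm : Odd m) (α : ℝ)
    (hα : α > (m : ℝ) - 1) (j : ℕ) :
    Real.sign (XLagII α m j 0) = 1 ∧
    Filter.Tendsto (fun z => XLagII α m j z) Filter.atBot Filter.atBot ∧
    ∃ x : ℝ, x < 0 ∧ XLagII α m j x = 0 := by
  have hpos := XLagII_natCast_zero_pos hm hα j
  have hlim : Tendsto (fun z => XLagII α m j z) atBot atBot :=
    tendsto_XLagII_atBot (by have := hm.pos; omega)
      (by linarith [(Nat.cast_nonneg j : (0 : ℝ) ≤ j)])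
  have hcont : Continuous fun z => XLagII α m j z := by
    simpa only [XLagII_eq_eval] using (xLagIIPoly α m j).continuous
  obtain ⟨x, hx, hroot⟩ := exists_lt_eq_of_tendsto_atBot hcont hlim hpos
  exact ⟨Real.sign_of_pos hpos, hlim, x, hx, hroot⟩

/-- For odd `m` and `α > m - 1`, the type II exceptional Laguerre polynomial is
positive at the origin, tends to `-∞` at `-∞`, and hence has a negative zero. -/
theorem xLaguerreII_negative_zero (m : ℕ) (hm : Odd m) (hm1 : 1 ≤ m) (α : ℝ)
    (hα : α > (m : ℝ) - 1) (j : ℕ) :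
    Real.sign (XLagII α m j 0) = 1 ∧
    Filter.Tendsto (fun z => XLagII α m j z) Filter.atBot Filter.atBot ∧
    ∃ x : ℝ, x < 0 ∧ XLagII α m j x = 0 :=
  xLaguerreII_negative_zero_general m hm α hα j
end
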